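/- If two sets of mentions M and M' over a sentence of n words have the same separator sequence, then they cover the same set of words: for every word position k, some mention of M contains k if and only if some mention of M' contains k. -/

import Mathlib

inductive Marker | S | E | C
deriving DecidableEq

/-- Separator sequence of a set of mentions (intervals). Gap `k` lies between word `k` and word `k+1`. -/
def sep (M : Set (ℕ × ℕ)) (k : ℕ) : Set Marker :=
  {m | (m = Marker.S ∧ ∃ p ∈ M, p.1 = k + 1) ∨
       (m = Marker.E ∧ ∃ p ∈ M, p.2 = k) ∨
       (m = Marker.C ∧ ∃ p ∈ M, p.1 ≤ k ∧ k + 1 ≤ p.2)}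

/-- `M` is a set of mentions over a sentence of `n` words. -/
def Valid (n : ℕ) (M : Set (ℕ × ℕ)) : Prop :=
  ∀ p ∈ M, 1 ≤ p.1 ∧ p.1 ≤ p.2 ∧ p.2 ≤ n

theorem E_mem_sep_iff {M : Set (ℕ × ℕ)} {k : ℕ} :
    Marker.E ∈ sep M k ↔ ∃ p ∈ M, p.2 = k := by
  simp [sep]

theorem C_mem_sep_iff {M : Set (ℕ × ℕ)} {k : ℕ} :
    Marker.C ∈ sep M k ↔ ∃ p ∈ M, p.1 ≤ k ∧ k + 1 ≤ p.2 := by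
  simp [sep]

theorem covered_iff_E_or_C_mem_sep {M : Set (ℕ × ℕ)} (hM : ∀ p ∈ M, p.1 ≤ p.2) (k : ℕ) :
    (∃ p ∈ M, p.1 ≤ k ∧ k ≤ p.2) ↔ Marker.E ∈ sep M k ∨ Marker.C ∈ sep M k := by
  rw [E_mem_sep_iff, C_mem_sep_iff]
  constructor
  · rintro ⟨p, hp, hstart, hend⟩
    rcases hend.eq_or_lt with rfl | hlt
    · exact .inl ⟨p, hp, rfl⟩
    · exact .inr ⟨p, hp, hstart, hlt⟩
  · rintro (⟨p, hp, rfl⟩ | ⟨p, hp, hstart, hend⟩)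
    · exact ⟨p, hp, hM p hp, le_rfl⟩
    · exact ⟨p, hp, hstart, k.le_succ.trans hend⟩

theorem Valid.fst_le_snd {n : ℕ} {M : Set (ℕ × ℕ)} (hM : Valid n M) : ∀ p ∈ M, p.1 ≤ p.2 :=
  fun p hp => (hM p hp).2.1

theorem same_separators_same_coverage (n : ℕ) (M M' : Set (ℕ × ℕ))
    (hM : Valid n M) (hM' : Valid n M') (h : sep M = sep M') :
    ∀ k : ℕ, (∃ p ∈ M, p.1 ≤ k ∧ k ≤ p.2) ↔ (∃ p ∈ M', p.1 ≤ k ∧ k ≤ p.2) := by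
  intro k
  rw [covered_iff_E_or_C_mem_sep hM.fst_le_snd, covered_iff_E_or_C_mem_sep hM'.fst_le_snd, h]
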